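/- arXiv:2009.13715 — 2 statements merged into one kernel-verified Lean document; each statement's English description precedes it below -/
import Mathlib

section
/- In the MIP for cycles, the constraint that the total number of selected arcs is at most K, combined with flow balance and at-most-one out-flow per vertex, guarantees that any integer feasible solution decomposes into vertex-disjoint simple directed cycles each of length at most K; hence each individual cycle is feasible without any subtour-elimination constraints. -/
/-!
Out-flow at most one and flow balance make the selected arcs a partial injection in which the
head of every arc is again the tail of an arc. Sending each vertex to its out-neighbour, and
fixing the vertices without one, is then an injective and hence bijective self-map of the finite
vertex set; its periodic orbits through the vertices with an out-arc are exactly the cycles of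
the support. A cycle consists of distinct vertices, each carrying one unit of out-flow, so its
length is at most the total flow and hence at most `K`.
-/

/-- A (simple) directed cycle in a digraph given by the arc relation `A`. -/
def IsDiCycle {V : Type*} (A : V → V → Prop) (c : List V) : Prop :=
  c ≠ [] ∧ c.Nodup ∧ c.Chain' A ∧ ∀ h : c ≠ [], A (c.getLast h) (c.head h)

open Function

theorem Cycle.chain_coe_iff_forall_mem_zip_rotate_one {α : Type*} {r : α → α → Prop}
    {l : List α} : Cycle.Chain r (l : Cycle α) ↔ ∀ p ∈ l.zip (l.rotate 1), r p.1 p.2 := by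
  cases l with
  | nil => simp
  | cons a t =>
    rw [Cycle.chain_coe_cons, ← List.cons_append, List.isChain_cons_append_singleton_iff_forall₂,
      List.forall₂_iff_zip, List.rotate_cons_succ, List.rotate_zero]
    simp

theorem List.exists_mem_zip_rotate_one {α : Type*} {l : List α} {a : α} (h : a ∈ l) :
    ∃ b, (a, b) ∈ l.zip (l.rotate 1) := by
  obtain ⟨i, hi, rfl⟩ := List.mem_iff_getElem.1 h
  have hi' : i < (l.zip (l.rotate 1)).length := by simpa using hi
  exact ⟨_, List.getElem_zip ▸ List.getElem_mem hi'⟩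

theorem List.mem_zip_rotate_one_iff {α : Type*} {f : α → α} {l : List α}
    (h : Cycle.Chain (fun a b => f a = b) (l : Cycle α)) {a b : α} :
    (a, b) ∈ l.zip (l.rotate 1) ↔ a ∈ l ∧ f a = b := by
  rw [Cycle.chain_coe_iff_forall_mem_zip_rotate_one] at h
  refine ⟨fun hab => ⟨(List.of_mem_zip hab).1, h _ hab⟩, ?_⟩
  rintro ⟨ha, rfl⟩
  obtain ⟨b, hab⟩ := List.exists_mem_zip_rotate_one ha
  rwa [h _ hab]

theorem isDiCycle_iff {V : Type*} {R : V → V → Prop} {c : List V} :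
    IsDiCycle R c ↔ c ≠ [] ∧ c.Nodup ∧ Cycle.Chain R (c : Cycle V) := by
  cases c with
  | nil => simp [IsDiCycle]
  | cons a t =>
    rw [Cycle.chain_coe_cons, ← List.cons_append, List.isChain_append]
    simp [IsDiCycle, List.getLast?_eq_some_getLast]
    exact fun _ _ _ => Iff.rfl

namespace Function

variable {α : Type*} {f : α → α} {x : α}

/-- The representative is chosen on the cycle itself, so all points of one orbit give the same
list. -/
noncomputable def orbitList (f : α → α) (x : α) : List α :=
  Quotient.out (periodicOrbit f x)

theorem coe_orbitList (f : α → α) (x : α) : (orbitList f x : Cycle α) = periodicOrbit f x :=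
  Quotient.out_eq _

theorem nodup_orbitList : (orbitList f x).Nodup := by
  rw [← Cycle.nodup_coe_iff, coe_orbitList]
  exact nodup_periodicOrbit

theorem orbitList_ne_nil (hx : x ∈ periodicPts f) : orbitList f x ≠ [] := by
  rw [Ne, ← Cycle.coe_eq_nil, coe_orbitList, periodicOrbit_eq_nil_iff_not_periodic_pt]
  exact not_not.2 hx

theorem mem_orbitList_iff (hx : x ∈ periodicPts f) {y : α} :
    y ∈ orbitList f x ↔ ∃ n, f^[n] x = y := by
  rw [← Cycle.mem_coe_iff, coe_orbitList, mem_periodicOrbit_iff hx]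

theorem orbitList_iterate (hx : x ∈ periodicPts f) (n : ℕ) :
    orbitList f (f^[n] x) = orbitList f x := by
  rw [orbitList, periodicOrbit_apply_iterate_eq hx, orbitList]

theorem orbitList_chain (hx : x ∈ periodicPts f) {r : α → α → Prop} :
    Cycle.Chain r (orbitList f x : Cycle α) ↔ ∀ n, r (f^[n] x) (f^[n + 1] x) := by
  rw [coe_orbitList, periodicOrbit_chain' r hx]

theorem mem_zip_orbitList_iff (hx : x ∈ periodicPts f) {u v : α} :
    (u, v) ∈ (orbitList f x).zip ((orbitList f x).rotate 1) ↔ u ∈ orbitList f x ∧ f u = v :=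
  List.mem_zip_rotate_one_iff <| (orbitList_chain hx).2 fun _ => (iterate_succ_apply' f _ x).symm

end Function

section PartialInjection

variable {V : Type*} {R : V → V → Prop}

open Classical in
noncomputable def succOrSelf (R : V → V → Prop) (u : V) : V :=
  if h : ∃ v, R u v then h.choose else u

theorem rel_succOrSelf {u : V} (h : ∃ v, R u v) : R u (succOrSelf R u) := by
  rw [succOrSelf, dif_pos h]
  exact h.choose_spec

theorem succOrSelf_of_not_exists {u : V} (h : ¬∃ v, R u v) : succOrSelf R u = u := by
  rw [succOrSelf, dif_neg h]

theorem succOrSelf_eq_of_rel (hR : Relator.RightUnique R) {u v : V} (h : R u v) :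
    succOrSelf R u = v :=
  hR (rel_succOrSelf ⟨v, h⟩) h

theorem exists_rel_iterate_succOrSelf (hsucc : ∀ ⦃u v⦄, R u v → ∃ w, R v w) {u : V}
    (hu : ∃ v, R u v) (n : ℕ) : ∃ v, R ((succOrSelf R)^[n] u) v := by
  induction n with
  | zero => exact hu
  | succ n ih =>
    rw [iterate_succ_apply']
    exact hsucc (rel_succOrSelf ih)

theorem succOrSelf_injective (hL : Relator.LeftUnique R) (hsucc : ∀ ⦃u v⦄, R u v → ∃ w, R v w) :
    Injective (succOrSelf R) := by
  -- a vertex without out-arc is fixed, and it cannot be the head of an arc either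
  have key : ∀ {a b : V}, (∃ v, R a v) → succOrSelf R a = succOrSelf R b → ∃ v, R b v := by
    intro a b ha hab
    by_contra hb
    rw [succOrSelf_of_not_exists hb] at hab
    exact hb (hsucc (hab ▸ rel_succOrSelf ha))
  intro a b hab
  by_cases ha : ∃ v, R a v
  · exact hL (rel_succOrSelf ha) (hab ▸ rel_succOrSelf (key ha hab))
  · have hb : ¬∃ v, R b v := fun hb => ha (key hb hab.symm)
    rwa [succOrSelf_of_not_exists ha, succOrSelf_of_not_exists hb] at hab

theorem exists_isDiCycle_decomposition [Fintype V] (hR : Relator.RightUnique R)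
    (hL : Relator.LeftUnique R) (hsucc : ∀ ⦃u v⦄, R u v → ∃ w, R v w) :
    ∃ Cs : Finset (List V),
      (∀ c ∈ Cs, IsDiCycle R c) ∧
      (∀ c ∈ Cs, ∀ c' ∈ Cs, c ≠ c' → ∀ v ∈ c, v ∉ c') ∧
      (∀ u v : V, R u v ↔ ∃ c ∈ Cs, (u, v) ∈ c.zip (c.rotate 1)) := by
  classical
  set g := succOrSelf R
  have hper : ∀ x, x ∈ periodicPts g := (succOrSelf_injective hL hsucc).mem_periodicPts
  have hdom : ∀ {x u}, (∃ v, R x v) → u ∈ orbitList g x → ∃ v, R u v := by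
    intro x u hx hu
    obtain ⟨n, rfl⟩ := (mem_orbitList_iff (hper x)).1 hu
    exact exists_rel_iterate_succOrSelf hsucc hx n
  refine ⟨(Finset.univ.filter fun x => ∃ v, R x v).image (orbitList g), ?_, ?_, ?_⟩
  · simp only [Finset.mem_image, Finset.mem_filter, Finset.mem_univ, true_and]
    rintro _ ⟨x, hx, rfl⟩
    refine isDiCycle_iff.2 ⟨orbitList_ne_nil (hper x), nodup_orbitList, ?_⟩
    exact (orbitList_chain (hper x)).2 fun n =>
      iterate_succ_apply' g n x ▸ rel_succOrSelf (exists_rel_iterate_succOrSelf hsucc hx n)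
  · simp only [Finset.mem_image]
    rintro _ ⟨x, -, rfl⟩ _ ⟨x', -, rfl⟩ hne v hv hv'
    obtain ⟨n, rfl⟩ := (mem_orbitList_iff (hper x)).1 hv
    obtain ⟨n', hn'⟩ := (mem_orbitList_iff (hper x')).1 hv'
    exact hne (by rw [← orbitList_iterate (hper x) n, ← hn', orbitList_iterate (hper x')])
  · intro u v
    simp only [Finset.mem_image, Finset.mem_filter, Finset.mem_univ, true_and]
    constructor
    · intro huv
      refine ⟨_, ⟨u, ⟨v, huv⟩, rfl⟩, (mem_zip_orbitList_iff (hper u)).2 ⟨?_, ?_⟩⟩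
      · exact (mem_orbitList_iff (hper u)).2 ⟨0, rfl⟩
      · exact succOrSelf_eq_of_rel hR huv
    · rintro ⟨_, ⟨x, hx, rfl⟩, huv⟩
      obtain ⟨hu, rfl⟩ := (mem_zip_orbitList_iff (hper x)).1 huv
      exact rel_succOrSelf (hdom hx hu)

end PartialInjection

section Flow

open Finset

variable {ι : Type*} [Fintype ι]

theorem eq_of_sum_le_one {f : ι → ℕ} (hf : ∑ i, f i ≤ 1) {i j : ι} (hi : 0 < f i)
    (hj : 0 < f j) : i = j := by
  classical
  by_contra hne
  have := sum_le_sum_of_subset (f := f) (subset_univ {i, j})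
  rw [sum_pair hne] at this
  omega

theorem exists_eq_one_of_sum_le_one {f : ι → ℕ} (hf : ∑ i, f i ≤ 1) (hpos : 0 < ∑ i, f i) :
    ∃ i, f i = 1 := by
  obtain ⟨i, -, hi⟩ := exists_ne_zero_of_sum_ne_zero hpos.ne'
  exact ⟨i, le_antisymm ((single_le_sum (fun _ _ => Nat.zero_le _) (mem_univ i)).trans hf)
    (Nat.one_le_iff_ne_zero.2 hi)⟩

end Flow

theorem stmt16_general {V : Type*} [Fintype V]
    (K : ℕ)
    (y : V → V → ℕ)
    (hbal : ∀ u : V, ∑ v, y u v = ∑ v, y v u)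
    (hout : ∀ u : V, ∑ v, y u v ≤ 1)
    (htot : ∑ u, ∑ v, y u v ≤ K) :
    ∃ Cs : Finset (List V),
      (∀ c ∈ Cs, IsDiCycle (fun u v => y u v = 1) c) ∧
      (∀ c ∈ Cs, c.length ≤ K) ∧
      (∀ c ∈ Cs, ∀ c' ∈ Cs, c ≠ c' → ∀ v ∈ c, v ∉ c') ∧
      (∀ u v : V, y u v = 1 ↔ ∃ c ∈ Cs, (u, v) ∈ c.zip (c.rotate 1)) := by
  classical
  have hin : ∀ v : V, ∑ u, y u v ≤ 1 := fun v => hbal v ▸ hout v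
  have hpos : ∀ {f : V → ℕ} {u}, f u = 1 → 0 < ∑ w, f w := fun h =>
    Finset.sum_pos' (fun _ _ => Nat.zero_le _) ⟨_, Finset.mem_univ _, h ▸ Nat.one_pos⟩
  obtain ⟨Cs, hcyc, hdisj, harcs⟩ := exists_isDiCycle_decomposition (R := fun u v => y u v = 1)
    (fun u _ _ hv hw => eq_of_sum_le_one (hout u) (hv ▸ Nat.one_pos) (hw ▸ Nat.one_pos))
    (fun _ _ w hu hv => eq_of_sum_le_one (hin w) (hu ▸ Nat.one_pos) (hv ▸ Nat.one_pos))
    (fun u v h => exists_eq_one_of_sum_le_one (hout v) (hbal v ▸ hpos (f := (y · v)) h))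
  refine ⟨Cs, hcyc, fun c hc => ?_, hdisj, harcs⟩
  have hunit : ∀ u ∈ c.toFinset, 1 ≤ ∑ w, y u w := fun u hu => by
    obtain ⟨v, huv⟩ := List.exists_mem_zip_rotate_one (List.mem_toFinset.1 hu)
    exact hpos ((harcs u v).2 ⟨c, hc, huv⟩)
  calc c.length = c.toFinset.card := (List.toFinset_card_of_nodup (hcyc c hc).2.1).symm
    _ ≤ ∑ u ∈ c.toFinset, ∑ w, y u w := by
        simpa using Finset.card_nsmul_le_sum _ _ 1 hunit
    _ ≤ ∑ u, ∑ w, y u w := Finset.sum_le_sum_of_subset (Finset.subset_univ _)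
    _ ≤ K := htot

/-- In the MIP for cycles, flow balance, at most one out-going arc per vertex, and a
total of at most `K` selected arcs guarantee that the support of any integer feasible
solution decomposes into vertex-disjoint simple directed cycles, each with at most `K`
arcs — without any subtour-elimination constraints. -/
theorem stmt16 {V : Type*} [Fintype V] [DecidableEq V]
    (A : V → V → Prop) (K : ℕ)
    (y : V → V → ℕ) (hy01 : ∀ u v, y u v ≤ 1)
    (hsupp : ∀ u v, y u v = 1 → A u v)
    (hbal : ∀ u : V, ∑ v, y u v = ∑ v, y v u)
    (hout : ∀ u : V, ∑ v, y u v ≤ 1)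
    (htot : ∑ u, ∑ v, y u v ≤ K) :
    ∃ Cs : Finset (List V),
      (∀ c ∈ Cs, IsDiCycle (fun u v => y u v = 1) c) ∧
      (∀ c ∈ Cs, c.length ≤ K) ∧
      (∀ c ∈ Cs, ∀ c' ∈ Cs, c ≠ c' → ∀ v ∈ c, v ∉ c') ∧
      (∀ u v : V, y u v = 1 ↔ ∃ c ∈ Cs, (u, v) ∈ c.zip (c.rotate 1)) :=
  stmt16_general K y hbal hout htot
end

section
/- A maximum-reduced-cost path ending at any layer dominates: in a layered rooted DAG with arc weights, the maximum over all nodes n (at layer ≥ 2) of the maximum-weight root-to-n path, minus a terminal penalty depending only on the last arc's label, equals the maximum over all feasible (possibly non-maximal) paths of their total reduced cost; in particular, the optimal chain may be a proper prefix of a longer root-to-terminal path. -/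
/-!
A root path ending with arc `a` has weight at most `η a`, by induction along the path using the
Bellman inequality `η a' + h a' a ≤ η a`; conversely, following the maximising predecessors
backwards from `a` (which terminates by acyclicity) yields a root path of weight exactly `η a`.
Moreover a root path has at least two arcs iff its last arc does not leave the root, as no arc
enters the root. Hence every reduced cost `η a - p a` is the cost of a chain and vice versa up to
domination, so both suprema agree.
-/

def IsArcPath {Nd Ar : Type*} (src dst : Ar → Nd) (r : Nd) (l : List Ar) : Prop :=
  l ≠ [] ∧ (∀ h : l ≠ [], src (l.head h) = r) ∧ l.Chain' (fun a b => dst a = src b)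

section PathWeight

variable {Ar β : Type*} [AddCommMonoid β] (w : Ar → Ar → β)

def pathWeight (l : List Ar) : β :=
  ((l.zip l.tail).map fun q => w q.1 q.2).sum

@[simp]
theorem pathWeight_singleton (a : Ar) : pathWeight w [a] = 0 := by
  simp [pathWeight]

theorem pathWeight_cons_cons (a b : Ar) (l : List Ar) :
    pathWeight w (a :: b :: l) = w a b + pathWeight w (b :: l) := by
  simp [pathWeight, List.zip_cons_cons]

theorem pathWeight_append_singleton {l : List Ar} {a' : Ar} (hl : l.getLast? = some a') (a : Ar) :
    pathWeight w (l ++ [a]) = pathWeight w l + w a' a := by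
  induction l with
  | nil => simp at hl
  | cons x t ih =>
    cases t with
    | nil =>
      obtain rfl : x = a' := by simpa using hl
      simp [pathWeight_cons_cons]
    | cons y s =>
      rw [List.getLast?_cons_cons] at hl
      simp only [List.cons_append] at ih ⊢
      rw [pathWeight_cons_cons, pathWeight_cons_cons, ih hl, add_assoc]

end PathWeight

namespace IsArcPath

variable {Nd Ar : Type*} {src dst : Ar → Nd} {r : Nd} {l : List Ar} {a a' : Ar}

theorem singleton_iff : IsArcPath src dst r [a] ↔ src a = r :=
  ⟨fun hl => hl.2.1 (List.cons_ne_nil a []), fun ha => ⟨List.cons_ne_nil a [], fun _ => ha,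
    List.isChain_singleton a⟩⟩

theorem append_singleton (hl : IsArcPath src dst r l) (hla : l.getLast? = some a')
    (hlink : dst a' = src a) : IsArcPath src dst r (l ++ [a]) := by
  refine ⟨by simp, fun _ => ?_, ?_⟩
  · rw [List.head_append_of_ne_nil hl.1]
    exact hl.2.1 hl.1
  · rw [List.Chain', List.isChain_append]
    refine ⟨hl.2.2, List.isChain_singleton a, ?_⟩
    simp_all

theorem of_append_singleton (hl : IsArcPath src dst r (l ++ [a])) (hne : l ≠ []) :
    IsArcPath src dst r l ∧ ∀ a' ∈ l.getLast?, dst a' = src a := by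
  obtain ⟨-, hhead, hchain⟩ := hl
  rw [List.Chain', List.isChain_append] at hchain
  refine ⟨⟨hne, fun _ => ?_, hchain.1⟩, fun a' ha' => hchain.2.2 a' ha' a rfl⟩
  simpa [List.head_append_of_ne_nil hne] using hhead (by simp)

theorem two_le_length_iff (hroot : ∀ a, dst a ≠ r) (hl : IsArcPath src dst r l)
    (hla : l.getLast? = some a) : 2 ≤ l.length ↔ src a ≠ r := by
  obtain ⟨m, rfl⟩ : ∃ m, l = m ++ [a] := List.getLast?_eq_some_iff.1 hla
  rcases m.eq_nil_or_concat' with rfl | ⟨m', a', rfl⟩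
  · simpa using singleton_iff.1 hl
  · have hlink := (hl.of_append_singleton (by simp)).2 a' (by simp)
    simpa [← hlink] using hroot a'

end IsArcPath

section Bellman

variable {Nd Ar : Type*} {src dst : Ar → Nd} {r : Nd}

theorem pathWeight_le_of_isArcPath {β : Type*} [AddCommMonoid β] [PartialOrder β]
    [IsOrderedAddMonoid β] {w : Ar → Ar → β} {η : Ar → β}
    (hη0 : ∀ a, src a = r → 0 ≤ η a) (hsuper : ∀ a' a, dst a' = src a → η a' + w a' a ≤ η a)
    {l : List Ar} (hl : IsArcPath src dst r l) {a : Ar} (hla : l.getLast? = some a) :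
    pathWeight w l ≤ η a := by
  induction l using List.reverseRecOn generalizing a with
  | nil => exact absurd rfl hl.1
  | append_singleton m x ih =>
    obtain rfl : x = a := by simpa using hla
    rcases m.eq_nil_or_concat' with rfl | ⟨m', a', rfl⟩
    · simpa using hη0 x (IsArcPath.singleton_iff.1 hl)
    · have hla' : (m' ++ [a']).getLast? = some a' := by simp
      obtain ⟨hm, hlink⟩ := hl.of_append_singleton (by simp)
      calc pathWeight w (m' ++ [a'] ++ [x]) = pathWeight w (m' ++ [a']) + w a' x :=
            pathWeight_append_singleton w hla' x
        _ ≤ η a' + w a' x := add_le_add_left (ih hm hla') _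
        _ ≤ η x := hsuper a' x (hlink a' hla')

theorem exists_isArcPath_pathWeight_eq {β : Type*} [AddCommMonoid β] {w : Ar → Ar → β}
    {η : Ar → β} (hacyc : WellFounded fun x y : Nd => ∃ a : Ar, src a = x ∧ dst a = y)
    (hη0 : ∀ a, src a = r → η a = 0)
    (hattain : ∀ a, src a ≠ r → ∃ a', dst a' = src a ∧ η a = η a' + w a' a) (a : Ar) :
    ∃ l, IsArcPath src dst r l ∧ l.getLast? = some a ∧ pathWeight w l = η a := by
  suffices ∀ n a, src a = n →
      ∃ l, IsArcPath src dst r l ∧ l.getLast? = some a ∧ pathWeight w l = η a from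
    this _ a rfl
  intro n
  induction n using hacyc.induction with
  | _ n ih =>
    intro a hsrc
    by_cases hr : src a = r
    · exact ⟨[a], IsArcPath.singleton_iff.2 hr, rfl, by simp [hη0 a hr]⟩
    · obtain ⟨a', hlink, hη⟩ := hattain a hr
      obtain ⟨l, hl, hla, hw⟩ := ih (src a') ⟨a', rfl, hlink.trans hsrc⟩ a' rfl
      refine ⟨l ++ [a], hl.append_singleton hla hlink, by simp, ?_⟩
      rw [pathWeight_append_singleton w hla, hw, hη]

end Bellman

theorem stmt19_general {Nd Ar : Type*} (src dst : Ar → Nd) (r : Nd)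
    (h : Ar → Ar → ℝ) (p : Ar → ℝ)
    (hacyc : WellFounded (fun x y : Nd => ∃ a : Ar, src a = x ∧ dst a = y))
    (hroot : ∀ a : Ar, dst a ≠ r)
    (η : Ar → ℝ)
    (hη0 : ∀ a, src a = r → η a = 0)
    (hηrec : ∀ a, src a ≠ r →
      IsGreatest {x : ℝ | ∃ a', dst a' = src a ∧ x = η a' + h a' a} (η a)) :
    sSup (insert (0 : ℝ) {x | ∃ a : Ar, src a ≠ r ∧ x = η a - p a})
      = sSup (insert (0 : ℝ) {x | ∃ l : List Ar, IsArcPath src dst r l ∧ 2 ≤ l.length ∧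
          ∃ a, l.getLast? = some a ∧
            x = ((l.zip l.tail).map (fun q => h q.1 q.2)).sum - p a}) := by
  have hsuper : ∀ a' a, dst a' = src a → η a' + h a' a ≤ η a := fun a' a hlink =>
    (hηrec a (hlink ▸ hroot a')).2 ⟨a', hlink, rfl⟩
  apply csSup_eq_csSup_of_forall_exists_le
  · rintro x (rfl | ⟨a, ha, rfl⟩)
    · exact ⟨0, Set.mem_insert _ _, le_rfl⟩
    · obtain ⟨l, hl, hla, hw⟩ :=
        exists_isArcPath_pathWeight_eq hacyc hη0 (fun a ha => (hηrec a ha).1) a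
      refine ⟨pathWeight h l - p a, Set.mem_insert_of_mem _
        ⟨l, hl, (hl.two_le_length_iff hroot hla).2 ha, a, hla, rfl⟩, ?_⟩
      rw [hw]
  · rintro x (rfl | ⟨l, hl, hlen, a, hla, rfl⟩)
    · exact ⟨0, Set.mem_insert _ _, le_rfl⟩
    · refine ⟨η a - p a, Set.mem_insert_of_mem _
        ⟨a, (hl.two_le_length_iff hroot hla).1 hlen, rfl⟩, ?_⟩
      exact sub_le_sub_right
        (pathWeight_le_of_isArcPath (fun a ha => (hη0 a ha).ge) hsuper hl hla) _

/-- A maximum-reduced-cost path ending at any layer dominates: in a layered rooted DAG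
where consecutive arcs `a', a` contribute weight `h a' a` and a path ending with arc `a`
pays the terminal penalty `p a` (the multiplier of the last label), with `η` satisfying
the Bellman recursion, the maximum of `0` and `η a - p a` over arcs `a` at layer ≥ 2
(i.e. with `src a ≠ r`) equals the maximum reduced cost over all encoded chains (paths
from the root with at least two arcs) together with the empty option `0`. -/
theorem stmt19 {Nd Ar : Type*} [Fintype Ar] (src dst : Ar → Nd) (r : Nd)
    (h : Ar → Ar → ℝ) (p : Ar → ℝ)
    (hacyc : WellFounded (fun x y : Nd => ∃ a : Ar, src a = x ∧ dst a = y))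
    (hroot : ∀ a : Ar, dst a ≠ r)
    (hreach : ∀ a : Ar, src a ≠ r → ∃ a' : Ar, dst a' = src a)
    (η : Ar → ℝ)
    (hη0 : ∀ a, src a = r → η a = 0)
    (hηrec : ∀ a, src a ≠ r →
      IsGreatest {x : ℝ | ∃ a', dst a' = src a ∧ x = η a' + h a' a} (η a)) :
    sSup (insert (0 : ℝ) {x | ∃ a : Ar, src a ≠ r ∧ x = η a - p a})
      = sSup (insert (0 : ℝ) {x | ∃ l : List Ar, IsArcPath src dst r l ∧ 2 ≤ l.length ∧
          ∃ a, l.getLast? = some a ∧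
            x = ((l.zip l.tail).map (fun q => h q.1 q.2)).sum - p a}) :=
  stmt19_general src dst r h p hacyc hroot η hη0 hηrec
end
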